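/- arXiv:2007.07348 — 2 statements merged into one kernel-verified Lean document; each statement's English description precedes it below -/
import Mathlib

section
/- If G is a d-regular highly symmetric graph on n vertices, then R(i) := Σ_j R_{ij} is independent of the vertex i, and equals (2/d)·K, where K is the Kemeny constant of the simple random walk on G. -/
open Finset Matrix Polynomial

/-- The transition matrix of the simple random walk on a graph:
`P i j = 1/deg(i)` if `i ~ j`, and `0` otherwise. -/
noncomputable def transMatrix {V : Type*} [Fintype V] (G : SimpleGraph V)
    [DecidableRel G.Adj] : Matrix V V ℝ :=
  fun i j => if G.Adj i j then (1 : ℝ) / (G.degree i) else 0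

/-- The stationary distribution of the simple random walk: `π i = deg(i) / (2|E|)`. -/
noncomputable def stationary {V : Type*} [Fintype V] [DecidableEq V] (G : SimpleGraph V)
    [DecidableRel G.Adj] : V → ℝ :=
  fun i => (G.degree i : ℝ) / (2 * G.edgeFinset.card)

/-- `H` is the table of expected hitting times of the simple random walk on `G`:
`H a b = E_a T_b`.  It is characterized by `H b b = 0` and the one-step
(first-step analysis) equations `H a b = 1 + ∑_j P a j * H j b` for `a ≠ b`. -/
def IsHittingTime {V : Type*} [Fintype V] (G : SimpleGraph V) [DecidableRel G.Adj]
    (H : V → V → ℝ) : Prop :=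
  (∀ b, H b b = 0) ∧ ∀ a b, a ≠ b → H a b = 1 + ∑ j, transMatrix G a j * H j b

/-- `R` is the table of effective resistances of `G` (unit resistor on each edge):
`R a b = v a - v b` where `v` is a potential for a unit current flow from `a` to `b`,
i.e. `L v = 1_a - 1_b` for the graph Laplacian `L`. -/
def IsEffectiveResistance {V : Type*} [Fintype V] [DecidableEq V] (G : SimpleGraph V)
    [DecidableRel G.Adj] (R : V → V → ℝ) : Prop :=
  ∀ a b, ∃ v : V → ℝ,
    G.lapMatrix ℝ *ᵥ v =
      (fun x => (if x = a then (1 : ℝ) else 0) - (if x = b then (1 : ℝ) else 0)) ∧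
    R a b = v a - v b

/-! First-step analysis says that the hitting-time vector `h_b = H(·, b)` satisfies
`(L h_b)(x) = deg x` for `x ≠ b`; since the entries of `L h_b` sum to zero,
`(L h_b)(b) = deg b - 2|E|`. Hence `L (h_b - h_a) = 2|E| (1_a - 1_b) = 2|E| L v` for the
unit-current potential `v`, and as harmonic functions on a connected graph are constant this gives
the commute-time identity `2|E| R_ab = H_ab + H_ba`. With `H` symmetric and `π ≡ d / 2|E|`,
`R_ij = (2/d) π_j H_ij`, and summing over `j` gives `(2/d) K`. -/

section

variable {V : Type*} [Fintype V] {G : SimpleGraph V} [DecidableRel G.Adj]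

theorem SimpleGraph.sum_lapMatrix_mulVec [DecidableEq V] (f : V → ℝ) :
    ∑ x, (G.lapMatrix ℝ *ᵥ f) x = 0 := by
  rw [← one_dotProduct, dotProduct_mulVec, ← mulVec_transpose, (G.isSymm_lapMatrix ℝ).eq]
  exact (congrArg (· ⬝ᵥ f) G.lapMatrix_mulVec_const_eq_zero).trans (zero_dotProduct f)

theorem SimpleGraph.IsRegularOfDegree.two_mul_card_edgeFinset {d : ℕ}
    (hreg : G.IsRegularOfDegree d) : 2 * #G.edgeFinset = Fintype.card V * d := by
  simp [← G.sum_degrees_eq_twice_card_edges, hreg.degree_eq]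

theorem sum_transMatrix_mul (x : V) (f : V → ℝ) :
    ∑ j, transMatrix G x j * f j = (∑ y ∈ G.neighborFinset x, f y) / G.degree x := by
  simp only [transMatrix, G.neighborFinset_eq_filter, sum_filter, sum_div, ite_div, ite_mul,
    zero_mul, zero_div, one_div_mul_eq_div]

namespace IsHittingTime

variable [DecidableEq V] {H : V → V → ℝ}

theorem lapMatrix_mulVec_of_ne (hH : IsHittingTime G H) {x b : V} (hxb : x ≠ b)
    (hreach : G.Reachable x b) : (G.lapMatrix ℝ *ᵥ fun y => H y b) x = G.degree x := by
  have hdeg : (G.degree x : ℝ) ≠ 0 := by exact_mod_cast (hreach.degree_pos_left hxb).ne'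
  rw [G.lapMatrix_mulVec_apply, hH.2 x b hxb, sum_transMatrix_mul]
  field_simp
  ring

theorem lapMatrix_mulVec_self (hH : IsHittingTime G H) (hconn : G.Connected) (b : V) :
    (G.lapMatrix ℝ *ᵥ fun y => H y b) b = G.degree b - 2 * #G.edgeFinset := by
  have hsum := G.sum_lapMatrix_mulVec fun y => H y b
  rw [← add_sum_erase _ _ (mem_univ b),
    sum_congr rfl fun x hx => hH.lapMatrix_mulVec_of_ne (ne_of_mem_erase hx) (hconn x b)] at hsum
  have hdeg : (G.degree b : ℝ) + ∑ x ∈ univ.erase b, (G.degree x : ℝ) = 2 * #G.edgeFinset := by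
    exact_mod_cast (add_sum_erase _ _ (mem_univ b)).trans G.sum_degrees_eq_twice_card_edges
  linarith

end IsHittingTime

theorem IsEffectiveResistance.eq_commuteTime_div [DecidableEq V] {R H : V → V → ℝ}
    (hR : IsEffectiveResistance G R) (hH : IsHittingTime G H) (hconn : G.Connected) (a b : V) :
    R a b = (H a b + H b a) / (2 * #G.edgeFinset) := by
  obtain ⟨v, hv, hRab⟩ := hR a b
  rcases eq_or_ne a b with rfl | hab
  · simp [hRab, hH.1]
  set c : ℝ := 2 * #G.edgeFinset
  have hc : c ≠ 0 := by
    obtain ⟨w, haw⟩ := (G.degree_pos_iff_exists_adj a).mp ((hconn a b).degree_pos_left hab)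
    have : 0 < #G.edgeFinset := card_pos.mpr ⟨_, G.mem_edgeFinset.mpr (G.mem_edgeSet.mpr haw)⟩
    positivity
  have hharmonic : G.lapMatrix ℝ *ᵥ ((fun y => H y b) - (fun y => H y a) - c • v) = 0 := by
    ext x
    rw [mulVec_sub, mulVec_sub, mulVec_smul, hv]
    simp only [Pi.sub_apply, Pi.smul_apply, smul_eq_mul, Pi.zero_apply]
    rcases eq_or_ne x a with rfl | hxa
    · rw [hH.lapMatrix_mulVec_of_ne hab (hconn x b), hH.lapMatrix_mulVec_self hconn]
      simp [hab, c]
    rcases eq_or_ne x b with rfl | hxb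
    · rw [hH.lapMatrix_mulVec_self hconn, hH.lapMatrix_mulVec_of_ne hab.symm (hconn x a)]
      simp [hab.symm, c]
    · rw [hH.lapMatrix_mulVec_of_ne hxb (hconn x b), hH.lapMatrix_mulVec_of_ne hxa (hconn x a)]
      simp [hxa, hxb]
  have hconst := G.lapMatrix_mulVec_eq_zero_iff_forall_reachable.mp hharmonic a b (hconn a b)
  simp only [Pi.sub_apply, Pi.smul_apply, smul_eq_mul, hH.1] at hconst
  rw [hRab, eq_div_iff hc]
  linarith

end

/-- If `G` is a `d`-regular highly symmetric graph, then `R(i) = ∑_j R_{ij}` is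
independent of the vertex `i` and equals `(2/d)·K`, where `K` is the Kemeny
constant (`K = ∑_j π_j E_i T_j`, independent of `i`). -/
theorem resistance_sum_regular_HS {V : Type*} [Fintype V] [DecidableEq V]
    (G : SimpleGraph V) [DecidableRel G.Adj] (hconn : G.Connected)
    (d : ℕ) (hreg : G.IsRegularOfDegree d)
    (H : V → V → ℝ) (hH : IsHittingTime G H) (hHS : ∀ a b, H a b = H b a)
    (R : V → V → ℝ) (hR : IsEffectiveResistance G R)
    (K : ℝ) (hK : ∀ i, ∑ j, stationary G j * H i j = K) :
    ∀ i, ∑ j, R i j = 2 / d * K := by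
  intro i
  have hedges : (2 * #G.edgeFinset : ℝ) = Fintype.card V * d := by
    exact_mod_cast hreg.two_mul_card_edgeFinset
  have hterm : ∀ j, R i j = 2 / d * (stationary G j * H i j) := by
    intro j
    rw [hR.eq_commuteTime_div hH hconn, hHS j i, stationary, hreg.degree_eq, hedges]
    rcases eq_or_ne d 0 with rfl | hd
    · simp -- both sides vanish by `x / 0 = 0`
    · field_simp
      ring
  rw [sum_congr rfl fun j _ => hterm j, ← mul_sum, hK]
end

section
/- If G is a d-regular graph on n vertices that is highly symmetric, then its Kirchhoff index satisfies R(G) = (n/d)·K, where K is the Kemeny constant. -/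
open Finset Matrix Polynomial

/-!
First-step analysis says that the Laplacian maps the hitting-time column `H · b` to
`deg - 2|E| · 1_b`. Subtracting the columns for `a` and `b` gives `2|E|` times a unit current
from `a` to `b`, and on a connected graph potentials are unique up to a constant, which yields
the commute-time identity `H a b + H b a = 2|E| · R a b`. On a `d`-regular graph `2|E| = n d` and
`π` is uniform, so symmetric hitting times give `R a b = 2 H a b / (n d)`, while every row of
`H` sums to `n K`.
-/

namespace SimpleGraph

theorem sum_lapMatrix_mulVec_s5 {V R : Type*} [Fintype V] [DecidableEq V] [CommRing R]
    (G : SimpleGraph V) [DecidableRel G.Adj] (x : V → R) :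
    ∑ i, (G.lapMatrix R *ᵥ x) i = 0 := by
  have h := dotProduct_mulVec (fun _ ↦ (1 : R)) (G.lapMatrix R) x
  rw [← mulVec_transpose, (G.isSymm_lapMatrix (R := R)).eq, lapMatrix_mulVec_const_eq_zero,
    zero_dotProduct] at h
  simpa [dotProduct] using h

variable {V : Type*} [Fintype V] {G : SimpleGraph V} [DecidableRel G.Adj]

theorem Preconnected.sub_eq_sub_of_lapMatrix_mulVec_eq [DecidableEq V] (hG : G.Preconnected)
    {v w : V → ℝ} (h : G.lapMatrix ℝ *ᵥ v = G.lapMatrix ℝ *ᵥ w) (a b : V) :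
    v a - v b = w a - w b := by
  have hvw := (lapMatrix_mulVec_eq_zero_iff_forall_reachable G (x := v - w)).1
    (by rw [mulVec_sub, h, sub_self]) a b (hG a b)
  simp only [Pi.sub_apply] at hvw
  linarith

theorem IsRegularOfDegree.two_mul_card_edgeFinset_s5 {d : ℕ} (hreg : G.IsRegularOfDegree d) :
    2 * #G.edgeFinset = Fintype.card V * d := by
  simp [← sum_degrees_eq_twice_card_edges, hreg.degree_eq]

end SimpleGraph

section RandomWalk

open SimpleGraph

variable {V : Type*} [Fintype V] {G : SimpleGraph V} [DecidableRel G.Adj]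

theorem degree_mul_transMatrix (i j : V) :
    G.degree i * transMatrix G i j = if G.Adj i j then 1 else 0 := by
  unfold transMatrix
  split_ifs with hij
  · have : (G.degree i : ℝ) ≠ 0 := by exact_mod_cast hij.degree_pos_left.ne'
    field_simp
  · rw [mul_zero]

theorem IsHittingTime.lapMatrix_mulVec_apply_of_ne [DecidableEq V] {H : V → V → ℝ}
    (hH : IsHittingTime G H) {b x : V} (hxb : x ≠ b) :
    (G.lapMatrix ℝ *ᵥ fun y ↦ H y b) x = G.degree x := by
  have hnbr : ∑ u ∈ G.neighborFinset x, H u b = G.degree x * (H x b - 1) := by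
    rw [hH.2 x b hxb, add_sub_cancel_left, mul_sum, neighborFinset_eq_filter, sum_filter]
    refine sum_congr rfl fun j _ ↦ ?_
    rw [← mul_assoc, degree_mul_transMatrix, ite_mul, one_mul, zero_mul]
  rw [lapMatrix_mulVec_apply, hnbr]
  ring

theorem IsHittingTime.lapMatrix_mulVec [DecidableEq V] {H : V → V → ℝ}
    (hH : IsHittingTime G H) (b : V) :
    G.lapMatrix ℝ *ᵥ (fun y ↦ H y b) =
      fun x ↦ (G.degree x : ℝ) - 2 * #G.edgeFinset * (if x = b then 1 else 0) := by
  funext x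
  rcases eq_or_ne x b with rfl | hxb
  · -- the column sums of the Laplacian vanish, which pins down the remaining entry
    have hsum := G.sum_lapMatrix_mulVec_s5 fun y ↦ H y x
    rw [← add_sum_erase _ _ (mem_univ x),
      sum_congr rfl fun y hy ↦ hH.lapMatrix_mulVec_apply_of_ne (ne_of_mem_erase hy),
      sum_erase_eq_sub (mem_univ x), ← Nat.cast_sum, sum_degrees_eq_twice_card_edges] at hsum
    push_cast at hsum
    rw [if_pos rfl]
    linarith
  · rw [hH.lapMatrix_mulVec_apply_of_ne hxb, if_neg hxb]
    ring

theorem IsEffectiveResistance.apply_self [DecidableEq V] {R : V → V → ℝ}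
    (hR : IsEffectiveResistance G R) (a : V) : R a a = 0 := by
  obtain ⟨v, -, hv⟩ := hR a a
  rw [hv, sub_self]

theorem IsHittingTime.add_swap_eq_mul_resistance [DecidableEq V] (hG : G.Preconnected)
    {H : V → V → ℝ} (hH : IsHittingTime G H) {R : V → V → ℝ}
    (hR : IsEffectiveResistance G R) (a b : V) :
    H a b + H b a = 2 * #G.edgeFinset * R a b := by
  obtain ⟨v, hv, hRv⟩ := hR a b
  have hL : G.lapMatrix ℝ *ᵥ ((fun y ↦ H y b) - fun y ↦ H y a) =
      G.lapMatrix ℝ *ᵥ ((2 * #G.edgeFinset : ℝ) • v) := by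
    rw [mulVec_smul, hv, mulVec_sub, hH.lapMatrix_mulVec, hH.lapMatrix_mulVec]
    ext x
    simp only [Pi.sub_apply, Pi.smul_apply, smul_eq_mul]
    ring
  have := hG.sub_eq_sub_of_lapMatrix_mulVec_eq hL a b
  simp only [Pi.sub_apply, hH.1, Pi.smul_apply, smul_eq_mul] at this
  rw [hRv]
  linarith

theorem SimpleGraph.IsRegularOfDegree.stationary_eq [DecidableEq V] {d : ℕ}
    (hreg : G.IsRegularOfDegree d) (hd : d ≠ 0) (j : V) :
    stationary G j = (Fintype.card V : ℝ)⁻¹ := by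
  have hn : (Fintype.card V : ℝ) ≠ 0 := by exact_mod_cast (Fintype.card_pos_iff.2 ⟨j⟩).ne'
  rw [stationary, hreg.degree_eq, ← Nat.cast_ofNat, ← Nat.cast_mul,
    hreg.two_mul_card_edgeFinset_s5]
  push_cast
  field_simp

end RandomWalk

/-- If `G` is a `d`-regular highly symmetric graph on `n` vertices, then its
Kirchhoff index `R(G) = ∑_{i<j} R_{ij}` satisfies `R(G) = (n/d)·K`, where `K` is
the Kemeny constant. -/
theorem kirchhoff_regular_HS {V : Type*} [Fintype V] [DecidableEq V]
    (G : SimpleGraph V) [DecidableRel G.Adj] (hconn : G.Connected)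
    (d : ℕ) (hreg : G.IsRegularOfDegree d)
    (H : V → V → ℝ) (hH : IsHittingTime G H) (hHS : ∀ a b, H a b = H b a)
    (R : V → V → ℝ) (hR : IsEffectiveResistance G R)
    (K : ℝ) (hK : ∀ i, ∑ j, stationary G j * H i j = K) :
    (∑ i, ∑ j, R i j) / 2 = (Fintype.card V : ℝ) / d * K := by
  obtain rfl | hd := eq_or_ne d 0
  · have hR0 (i j : V) : R i j = 0 := by
      obtain rfl : i = j := by
        by_contra hij
        exact ((hconn i j).degree_pos_left hij).ne' (hreg.degree_eq i)
      exact hR.apply_self i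
    simp [hR0]
  have hn : (Fintype.card V : ℝ) ≠ 0 := by
    have := hconn.nonempty
    exact_mod_cast Fintype.card_ne_zero
  have hrow (i : V) : ∑ j, H i j = Fintype.card V * K := by
    rw [← hK i]
    simp only [hreg.stationary_eq hd, ← mul_sum]
    field_simp
  have hRH (i j : V) : R i j = 2 / (Fintype.card V * d) * H i j := by
    have hE : (2 * #G.edgeFinset : ℝ) = Fintype.card V * d := by
      exact_mod_cast hreg.two_mul_card_edgeFinset_s5
    have := hH.add_swap_eq_mul_resistance hconn.preconnected hR i j
    rw [hHS j i, hE] at this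
    field_simp
    linarith
  calc (∑ i, ∑ j, R i j) / 2 = (∑ i, 2 / (Fintype.card V * d) * ∑ j, H i j) / 2 := by
        simp only [hRH, mul_sum]
    _ = Fintype.card V / d * K := by
        simp only [hrow, sum_const, card_univ, nsmul_eq_mul]
        field_simp
end
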